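/- Let k be a commutative ring and let n be a natural number. Consider the monoid algebra k[H_{n+1}] of the hyperoctahedral group H_{n+1} and the augmentation map ε : k[H_{n+1}] → k, the k-algebra homomorphism sending every group element to 1. Then the kernel of ε equals the k-submodule of k[H_{n+1}] spanned by the set of differences {[g] - [g * w_{p,q,r}] : g ∈ H_{n+1}, p + q + r = n + 1}, where [h] denotes the basis element of the monoid algebra corresponding to h and * is the group multiplication. (This is the exactness, at the middle term, of the sequence 0 ← k ← k[Hom_{ΔH}([n],[0])] ← k[Hom_{ΔH}([n],[2])] used to compute degree-zero hyperoctahedral homology, under the identification of Hom_{ΔH}([n],[0]) with H_{n+1}.) -/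

import Mathlib

/-- The action of permutations on sign vectors, permuting the coordinates. -/
def signPermAction (m : ℕ) :
    Equiv.Perm (Fin m) →* MulAut (Fin m → Multiplicative (ZMod 2)) where
  toFun σ := MulEquiv.arrowCongr σ (MulEquiv.refl (Multiplicative (ZMod 2)))
  map_one' := by ext f i; rfl
  map_mul' σ τ := by ext f i; rfl

/-- The hyperoctahedral group `H_{n+1} = C₂^{n+1} ⋊ Σ_{n+1}`, realized as the group of
signed permutations of `Fin (n+1)`. -/
abbrev HyperoctahedralGroup (n : ℕ) : Type :=
  (Fin (n + 1) → Multiplicative (ZMod 2)) ⋊[signPermAction (n + 1)] Equiv.Perm (Fin (n + 1))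

/-- The underlying permutation of the block-flip element `w_{p,q,r}`: the first block of
size `p` moves to the end, the middle block of size `q` is reversed, and the last block of
size `r` moves to the front. -/
def blockFlipPerm (n p q r : ℕ) (h : p + q + r = n + 1) : Equiv.Perm (Fin (n + 1)) :=
  (finCongr h.symm).trans <|
    (finSumFinEquiv (m := p + q) (n := r)).symm.trans <|
      ((finSumFinEquiv (m := p) (n := q)).symm.sumCongr (Equiv.refl (Fin r))).trans <|
        (Equiv.sumComm (Fin p ⊕ Fin q) (Fin r)).trans <|
          ((Equiv.refl (Fin r)).sumCongr
              (((Equiv.refl (Fin p)).sumCongr (Fin.revPerm (n := q))).trans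
                (Equiv.sumComm (Fin p) (Fin q)))).trans <|
            ((Equiv.refl (Fin r)).sumCongr (finSumFinEquiv (m := q) (n := p))).trans <|
              (finSumFinEquiv (m := r) (n := q + p)).trans
                (finCongr (by omega : r + (q + p) = n + 1))

/-- The block-flip element `w_{p,q,r}` of the hyperoctahedral group: its sign component is
nontrivial exactly at the `q` middle-block positions `p, …, p + q - 1`, and its underlying
permutation is `blockFlipPerm`. -/
def blockFlip (n p q r : ℕ) (h : p + q + r = n + 1) : HyperoctahedralGroup n :=
  ⟨fun i => if p ≤ (i : ℕ) ∧ (i : ℕ) < p + q then Multiplicative.ofAdd (1 : ZMod 2) else 1,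
    blockFlipPerm n p q r h⟩

/-! For a group `G` generated by `S`, the kernel of the augmentation is spanned by the `[g] - [1]`,
and `[g] - [g * h]` is additive along a word in `S ∪ S⁻¹` spelling `h`, so it lies in the span of
the `[g] - [g * s]`, `s ∈ S`. It therefore suffices that the block flips generate `H_{n+1}`.
The flips with `q = 0` are rotations; `w_{0,1,n}` is a rotation times the sign change at `0`,
and conjugating by rotations gives every sign change. Stripping the signs off `w_{0,2,n-1}`
leaves a rotation times the transposition `(0 1)`, and a full cycle together with an adjacent
transposition generates the symmetric group. -/

namespace MonoidAlgebra

variable {k G : Type*} [CommRing k]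

theorem ker_lift_one_le_span_of_sub_one [Monoid G] :
    LinearMap.ker (lift k k G (1 : G →* k)).toLinearMap ≤
      Submodule.span k (Set.range fun g : G => of k G g - 1) := by
  intro x hx
  rw [LinearMap.mem_ker, AlgHom.toLinearMap_apply] at hx
  have key : ∀ y : MonoidAlgebra k G, y - algebraMap k _ (lift k k G 1 y) ∈
      Submodule.span k (Set.range fun g : G => of k G g - 1) := by
    intro y
    induction y using MonoidAlgebra.induction_linear with
    | zero => simp
    | add y z hy hz => convert add_mem hy hz using 1; simp only [map_add]; abel
    | single g a =>
      convert Submodule.smul_mem _ a (Submodule.subset_span (Set.mem_range_self g)) using 1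
      rw [smul_sub, of_apply, smul_single', mul_one, lift_single, MonoidHom.one_apply,
        Algebra.algebraMap_eq_smul_one, smul_eq_mul, mul_one]
  simpa [hx] using key x

variable [Group G]

theorem of_sub_of_mul_mem_span_of_mem_closure {S : Set G} {s : G} (hs : s ∈ Subgroup.closure S)
    (g : G) : of k G g - of k G (g * s) ∈
      Submodule.span k {x | ∃ g, ∃ s ∈ S, x = of k G g - of k G (g * s)} := by
  induction hs using Subgroup.closure_induction generalizing g with
  | mem s hs => exact Submodule.subset_span ⟨g, s, hs, rfl⟩
  | one => simp
  | mul a b _ _ ha hb => simpa [mul_assoc] using add_mem (ha g) (hb (g * a))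
  | inv a _ ha => simpa using neg_mem (ha (g * a⁻¹))

theorem ker_lift_one_eq_span_of_closure_eq_top {S : Set G} (hS : Subgroup.closure S = ⊤) :
    LinearMap.ker (lift k k G (1 : G →* k)).toLinearMap =
      Submodule.span k {x | ∃ g, ∃ s ∈ S, x = of k G g - of k G (g * s)} := by
  refine le_antisymm (ker_lift_one_le_span_of_sub_one.trans ?_) ?_
  · rw [Submodule.span_le]
    rintro _ ⟨g, rfl⟩
    have hg : g⁻¹ ∈ Subgroup.closure S := by rw [hS]; exact Subgroup.mem_top _
    simpa only [SetLike.mem_coe, mul_inv_cancel, map_one] using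
      of_sub_of_mul_mem_span_of_mem_closure (k := k) hg g
  · rw [Submodule.span_le]
    rintro _ ⟨g, s, -, rfl⟩
    rw [SetLike.mem_coe, LinearMap.mem_ker, AlgHom.toLinearMap_apply, map_sub, lift_of, lift_of,
      MonoidHom.one_apply, MonoidHom.one_apply, sub_self]

end MonoidAlgebra

theorem signPermAction_mulSingle {m : ℕ} (σ : Equiv.Perm (Fin m)) (i : Fin m)
    (x : Multiplicative (ZMod 2)) :
    signPermAction m σ (Pi.mulSingle i x) = Pi.mulSingle (σ i) x :=
  Pi.mulSingle_comp_equiv σ.symm i x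

section BlockFlipPerm

theorem blockFlipPerm_apply_val (n p q r : ℕ) (h : p + q + r = n + 1) (i : Fin (n + 1)) :
    (blockFlipPerm n p q r h i : ℕ) =
      if (i : ℕ) < p then r + q + i
      else if (i : ℕ) < p + q then r + (p + q - 1 - i)
      else i - (p + q) := by
  obtain ⟨j, rfl⟩ := (finCongr h).surjective i
  induction j using Fin.addCases with
  | left j => induction j using Fin.addCases <;> simp [blockFlipPerm] <;> omega
  | right c => simp [blockFlipPerm]; omega

variable {n : ℕ}

theorem blockFlipPerm_eq_finRotate (h : n + 0 + 1 = n + 1) :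
    blockFlipPerm n n 0 1 h = finRotate (n + 1) := by
  ext i
  simp only [blockFlipPerm_apply_val, coe_finRotate, Fin.ext_iff, Fin.val_last]
  split_ifs <;> omega

theorem blockFlipPerm_eq_finRotate_symm (h : 0 + 1 + n = n + 1) :
    blockFlipPerm n 0 1 n h = (finRotate (n + 1)).symm := by
  refine Equiv.ext fun i => ?_
  rw [Equiv.eq_symm_apply, Fin.ext_iff]
  simp only [blockFlipPerm_apply_val, coe_finRotate, Fin.ext_iff, Fin.val_last]
  split_ifs <;> omega

theorem finRotate_sq_mul_blockFlipPerm (h : 0 + 2 + n = n + 1 + 1) :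
    finRotate (n + 2) ^ 2 * blockFlipPerm (n + 1) 0 2 n h = Equiv.swap 0 1 := by
  refine Equiv.ext fun i => ?_
  rw [Equiv.swap_apply_def]
  split_ifs <;>
    simp only [Fin.ext_iff, sq, Equiv.Perm.mul_apply, blockFlipPerm_apply_val, coe_finRotate,
      Fin.val_last, Fin.val_zero, Fin.val_one] at * <;>
    split_ifs <;> omega

end BlockFlipPerm

namespace HyperoctahedralGroup

open SemidirectProduct

def blockFlips (n : ℕ) : Set (HyperoctahedralGroup n) :=
  {w | ∃ p q r : ℕ, ∃ h : p + q + r = n + 1, w = blockFlip n p q r h}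

variable {n : ℕ}

theorem blockFlip_mem_closure (p q r : ℕ) (h : p + q + r = n + 1) :
    blockFlip n p q r h ∈ Subgroup.closure (blockFlips n) :=
  Subgroup.subset_closure ⟨p, q, r, h, rfl⟩

theorem inr_finRotate_mem_closure :
    inr (finRotate (n + 1)) ∈ Subgroup.closure (blockFlips n) := by
  have h : n + 0 + 1 = n + 1 := rfl
  convert blockFlip_mem_closure n 0 1 h using 1
  refine SemidirectProduct.ext ?_ (blockFlipPerm_eq_finRotate h).symm
  funext i
  simp [blockFlip]

theorem inl_mulSingle_zero_mem_closure :
    (inl (Pi.mulSingle 0 (Multiplicative.ofAdd 1)) : HyperoctahedralGroup n) ∈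
      Subgroup.closure (blockFlips n) := by
  have h : 0 + 1 + n = n + 1 := by omega
  have hw : blockFlip n 0 1 n h =
      (inl (Pi.mulSingle 0 (Multiplicative.ofAdd 1)) : HyperoctahedralGroup n) *
        (inr (finRotate (n + 1)))⁻¹ := by
    rw [← map_inv, ← mk_eq_inl_mul_inr, Equiv.Perm.inv_def, ← blockFlipPerm_eq_finRotate_symm h]
    refine SemidirectProduct.ext ?_ rfl
    funext i
    simp only [blockFlip, Pi.mulSingle_apply, Fin.ext_iff, Fin.val_zero, zero_le, true_and,
      zero_add, Nat.lt_one_iff]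
  have hmem := mul_mem (blockFlip_mem_closure 0 1 n h) inr_finRotate_mem_closure
  rwa [hw, inv_mul_cancel_right] at hmem

theorem inl_mulSingle_mem_closure (i : Fin (n + 1)) (x : Multiplicative (ZMod 2)) :
    inl (Pi.mulSingle i x) ∈ Subgroup.closure (blockFlips n) := by
  obtain rfl | rfl : x = 1 ∨ x = Multiplicative.ofAdd 1 := by revert x; decide
  · simp [one_mem]
  induction i using Fin.induction with
  | zero => exact inl_mulSingle_zero_mem_closure
  | succ i hi =>
    have hconj := mul_mem (mul_mem inr_finRotate_mem_closure hi)
      (inv_mem inr_finRotate_mem_closure)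
    rwa [← map_inv, ← inl_aut, signPermAction_mulSingle, finRotate_apply,
      Fin.coeSucc_eq_succ] at hconj

theorem inl_mem_closure (ε : Fin (n + 1) → Multiplicative (ZMod 2)) :
    inl ε ∈ Subgroup.closure (blockFlips n) :=
  Subgroup.pi_mem_of_mulSingle_mem (H := (Subgroup.closure (blockFlips n)).comap inl) ε
    fun i => inl_mulSingle_mem_closure i (ε i)

theorem inr_blockFlipPerm_mem_closure (p q r : ℕ) (h : p + q + r = n + 1) :
    inr (blockFlipPerm n p q r h) ∈ Subgroup.closure (blockFlips n) := by
  change inr (blockFlip n p q r h).right ∈ _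
  rw [eq_inv_mul_of_mul_eq (inl_left_mul_inr_right _)]
  exact mul_mem (inv_mem (inl_mem_closure _)) (blockFlip_mem_closure p q r h)

theorem inr_mem_closure (σ : Equiv.Perm (Fin (n + 1))) :
    inr σ ∈ Subgroup.closure (blockFlips n) := by
  cases n with
  | zero =>
    obtain rfl : σ = 1 := Subsingleton.elim (α := Equiv.Perm (Fin 1)) _ _
    exact map_one (inr : _ →* HyperoctahedralGroup 0) ▸ one_mem _
  | succ n =>
    have hσ : σ ∈ Subgroup.closure {finRotate (n + 2), Equiv.swap 0 (finRotate (n + 2) 0)} := by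
      rw [Equiv.Perm.closure_cycle_adjacent_swap isCycle_finRotate support_finRotate]
      exact Subgroup.mem_top σ
    refine (Subgroup.closure_le ((Subgroup.closure (blockFlips (n + 1))).comap inr)).2 ?_ hσ
    rintro _ (rfl | rfl)
    · exact inr_finRotate_mem_closure
    · have h : 0 + 2 + n = n + 1 + 1 := by omega
      rw [finRotate_apply, zero_add, SetLike.mem_coe, Subgroup.mem_comap,
        ← finRotate_sq_mul_blockFlipPerm h, map_mul, map_pow]
      exact mul_mem (pow_mem inr_finRotate_mem_closure 2) (inr_blockFlipPerm_mem_closure 0 2 n h)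

theorem closure_blockFlips (n : ℕ) : Subgroup.closure (blockFlips n) = ⊤ := by
  refine eq_top_iff.2 fun g _ => ?_
  rw [← inl_left_mul_inr_right g]
  exact mul_mem (inl_mem_closure _) (inr_mem_closure _)

end HyperoctahedralGroup

/-- The kernel of the augmentation `ε : k[H_{n+1}] → k` is the `k`-submodule spanned by
the differences `[g] - [g * w_{p,q,r}]` for `g ∈ H_{n+1}` and `p + q + r = n + 1`. -/
theorem augmentation_ker_eq_span_blockFlip_differences
    (k : Type*) [CommRing k] (n : ℕ) :
    LinearMap.ker
        (MonoidAlgebra.lift k k (HyperoctahedralGroup n)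
            (1 : HyperoctahedralGroup n →* k)).toLinearMap =
      Submodule.span k
        {x : MonoidAlgebra k (HyperoctahedralGroup n) |
          ∃ (g : HyperoctahedralGroup n) (p q r : ℕ) (h : p + q + r = n + 1),
            x = MonoidAlgebra.of k (HyperoctahedralGroup n) g -
              MonoidAlgebra.of k (HyperoctahedralGroup n) (g * blockFlip n p q r h)} := by
  rw [MonoidAlgebra.ker_lift_one_eq_span_of_closure_eq_top
    (HyperoctahedralGroup.closure_blockFlips n)]
  congr 1
  ext x
  simp [HyperoctahedralGroup.blockFlips]
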